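/- The Tristram–Levine signature σ_ψ of the (2,5)-torus knot equals −4 if Re(ψ) > (1+√5)/4, equals −3 if Re(ψ) = (1+√5)/4, equals −2 if (√5−1)/4 < Re(ψ) < (1+√5)/4, equals −1 if Re(ψ) = (√5−1)/4, and equals 0 if 0 ≤ Re(ψ) < (√5−1)/4. -/

import Mathlib

open Matrix Polynomial

/-- The signature of a Hermitian complex matrix: the number of positive
eigenvalues minus the number of negative eigenvalues. -/
noncomputable def matSig {n : ℕ} (A : Matrix (Fin n) (Fin n) ℂ) : ℤ :=
  if h : A.IsHermitian then
    ((Finset.univ.filter fun i => 0 < h.eigenvalues i).card : ℤ) -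
    ((Finset.univ.filter fun i => h.eigenvalues i < 0).card : ℤ)
  else 0

/-- A Seifert matrix for the (2,5)-torus knot: the 4×4 matrix with −1 on the
diagonal, 1 on the superdiagonal and 0 elsewhere (viewed as complex). -/
def torus25SeifertMatrix : Matrix (Fin 4) (Fin 4) ℂ :=
  Matrix.of fun i j =>
    if (i : ℕ) = (j : ℕ) then -1 else if (j : ℕ) = (i : ℕ) + 1 then 1 else 0


lemma charpoly_conj {n : Type*} [Fintype n] [DecidableEq n] (U D V : Matrix n n ℂ)
    (hUV : U * V = 1) (hVU : V * U = 1) :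
    (U * D * V).charpoly = D.charpoly := by
  have hc : charmatrix (U * D * V) = U.map C * charmatrix D * V.map C := by
    unfold charmatrix
    simp only [RingHom.mapMatrix_apply, Matrix.mul_sub, Matrix.sub_mul]
    congr 1
    · have h1 : U.map C * Matrix.scalar n (X : ℂ[X]) = Matrix.scalar n (X : ℂ[X]) * U.map C :=
        ((Matrix.scalar_commute (X : ℂ[X]) (fun r => Commute.all _ _) (U.map C))).symm
      rw [h1, Matrix.mul_assoc, ← Matrix.map_mul, hUV]
      simp
    · rw [← Matrix.map_mul, ← Matrix.map_mul]
  rw [Matrix.charpoly, Matrix.charpoly, hc, det_mul, det_mul, mul_comm, ← mul_assoc,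
    ← det_mul, ← Matrix.map_mul, hVU]
  simp

lemma charpoly_eq_prod_eig {n : ℕ} (H : Matrix (Fin n) (Fin n) ℂ) (h : H.IsHermitian) :
    H.charpoly = ((Finset.univ.val.map fun i => Complex.ofReal (h.eigenvalues i)).map
      fun a => X - C a).prod := by
  conv_lhs => rw [h.spectral_theorem, Unitary.conjStarAlgAut_apply]
  rw [charpoly_conj _ _ _ (Matrix.mem_unitaryGroup_iff.mp (h.eigenvectorUnitary).2)
    (Matrix.mem_unitaryGroup_iff'.mp (h.eigenvectorUnitary).2)]
  rw [Matrix.charpoly_of_upperTriangular _ (Matrix.blockTriangular_diagonal _)]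
  rw [Finset.prod_eq_multiset_prod, Multiset.map_map]
  simp [Function.comp]

lemma eig_multiset {n : ℕ} (H : Matrix (Fin n) (Fin n) ℂ) (h : H.IsHermitian) (m : Multiset ℝ)
    (hc : H.charpoly = ((m.map Complex.ofReal).map fun a => X - C a).prod) :
    Finset.univ.val.map h.eigenvalues = m := by
  have h1 := charpoly_eq_prod_eig H h
  rw [hc] at h1
  have h2 := congrArg Polynomial.roots h1
  rw [Polynomial.roots_multiset_prod_X_sub_C, Polynomial.roots_multiset_prod_X_sub_C] at h2
  have h3 : (Finset.univ.val.map h.eigenvalues).map Complex.ofReal = m.map Complex.ofReal := by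
    rw [Multiset.map_map]; exact h2.symm
  exact Multiset.map_injective Complex.ofReal_injective h3

lemma matSig_eq_countP {n : ℕ} (H : Matrix (Fin n) (Fin n) ℂ) (h : H.IsHermitian) (m : Multiset ℝ)
    (hm : Finset.univ.val.map h.eigenvalues = m) :
    matSig H = (m.countP fun r => 0 < r : ℕ) - (m.countP fun r => r < 0 : ℕ) := by
  rw [matSig, dif_pos h]
  congr 2
  · rw [← hm, Multiset.countP_map]; rfl
  · rw [← hm, Multiset.countP_map]; rfl


lemma torus_explicit (p q : ℂ) :
    q • torus25SeifertMatrix + p • torus25SeifertMatrixᵀ =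
    !![-(p+q), q, 0, 0; p, -(p+q), q, 0; 0, p, -(p+q), q; 0, 0, p, -(p+q)] := by
  ext i j
  fin_cases i <;> fin_cases j <;>
    norm_num [torus25SeifertMatrix, Matrix.vecHead, Matrix.vecTail]

lemma torus_charpoly (p q : ℂ) (h : p * q = 1) :
    (!![-(p+q), q, 0, 0; p, -(p+q), q, 0; 0, p, -(p+q), q;
        0, 0, p, -(p+q)] : Matrix (Fin 4) (Fin 4) ℂ).charpoly
      = (X + C (p+q))^4 - 3*(X + C (p+q))^2 + 1 := by
  have hc : C p * C q = (1 : ℂ[X]) := by rw [← C_mul, h, C_1]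
  rw [Matrix.charpoly]
  have he : charmatrix (!![-(p+q), q, 0, 0; p, -(p+q), q, 0; 0, p, -(p+q), q;
        0, 0, p, -(p+q)] : Matrix (Fin 4) (Fin 4) ℂ) =
      !![X + C (p+q), -C q, 0, 0; -C p, X + C (p+q), -C q, 0;
         0, -C p, X + C (p+q), -C q; 0, 0, -C p, X + C (p+q)] := by
    ext i j
    fin_cases i <;> fin_cases j <;>
      norm_num [charmatrix_apply, Matrix.diagonal_apply, Matrix.vecHead, Matrix.vecTail,
        Fin.ext_iff] <;> ring
  rw [he]
  simp [Matrix.det_succ_row_zero, Fin.sum_univ_succ, Matrix.det_fin_three, Fin.succAbove,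
    Matrix.vecHead, Matrix.vecTail]
  linear_combination (-3*(X + C p + C q)^2 + C p * C q + 1) * hc

lemma prod_form (c a b : ℝ) (hab : a * b = 1) (hs : a^2 + b^2 = 3) :
    ((({-c + a, -c - a, -c + b, -c - b} : Multiset ℝ).map Complex.ofReal).map
       fun z => X - C z).prod
      = (X + C ((c : ℂ)))^4 - 3*(X + C ((c : ℂ)))^2 + 1 := by
  have h1 : C ((a : ℂ)) * C ((b : ℂ)) = (1 : ℂ[X]) := by
    rw [← C_mul, ← Complex.ofReal_mul, hab, Complex.ofReal_one, C_1]
  have h2 : C ((a : ℂ))^2 + C ((b : ℂ))^2 = (3 : ℂ[X]) := by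
    rw [← C_pow, ← C_pow, ← C_add, ← Complex.ofReal_pow, ← Complex.ofReal_pow,
      ← Complex.ofReal_add, hs]
    push_cast
    simp [map_ofNat]
  simp only [Multiset.insert_eq_cons, Multiset.map_cons, Multiset.map_singleton,
    Multiset.prod_cons, Multiset.prod_singleton, Complex.ofReal_add, Complex.ofReal_sub,
    Complex.ofReal_neg, map_add, map_sub, map_neg]
  linear_combination (-((X + C ((c:ℂ)))^2)) * h2 + (C ((a:ℂ)) * C ((b:ℂ)) + 1) * h1

lemma torus_herm (p q : ℂ) (hpq : star p = q) :
    (!![-(p+q), q, 0, 0; p, -(p+q), q, 0; 0, p, -(p+q), q;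
        0, 0, p, -(p+q)] : Matrix (Fin 4) (Fin 4) ℂ).IsHermitian := by
  have hqp : star q = p := by rw [← hpq, star_star]
  ext i j
  fin_cases i <;> fin_cases j <;>
    simp [Matrix.conjTranspose_apply, Matrix.vecHead, Matrix.vecTail, hpq, hqp] <;> ring


/-- The Tristram–Levine signature `σ_ψ` of the (2,5)-torus knot (the signature
of `ψ̄A + ψAᵀ`, `|ψ|=1`) equals `−4` if `Re(ψ) > (1+√5)/4`, `−3` if
`Re(ψ) = (1+√5)/4`, `−2` if `(√5−1)/4 < Re(ψ) < (1+√5)/4`, `−1` if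
`Re(ψ) = (√5−1)/4`, and `0` if `0 ≤ Re(ψ) < (√5−1)/4`. -/
theorem torus25_tristram_levine_signature (ψ : ℂ) (hψ : ‖ψ‖ = 1) :
    let A := torus25SeifertMatrix
    let H := (starRingEnd ℂ ψ) • A + ψ • Aᵀ
    (ψ.re > (1 + Real.sqrt 5) / 4 → matSig H = -4) ∧
    (ψ.re = (1 + Real.sqrt 5) / 4 → matSig H = -3) ∧
    ((Real.sqrt 5 - 1) / 4 < ψ.re → ψ.re < (1 + Real.sqrt 5) / 4 → matSig H = -2) ∧
    (ψ.re = (Real.sqrt 5 - 1) / 4 → matSig H = -1) ∧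
    (0 ≤ ψ.re → ψ.re < (Real.sqrt 5 - 1) / 4 → matSig H = 0) := by
  intro A H
  have h5 : Real.sqrt 5 ^ 2 = 5 := Real.sq_sqrt (by norm_num)
  have h5a : (2:ℝ) < Real.sqrt 5 := by nlinarith [Real.sqrt_nonneg 5]
  have h5b : Real.sqrt 5 < 3 := by nlinarith [Real.sqrt_nonneg 5]
  set x := ψ.re with hx
  have hns : Complex.normSq ψ = 1 := by
    rw [← Complex.sq_norm, hψ]; norm_num
  have hmul : ψ * (starRingEnd ℂ ψ) = 1 := by
    rw [Complex.mul_conj, hns, Complex.ofReal_one]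
  have hexp : H = !![-(ψ + starRingEnd ℂ ψ), starRingEnd ℂ ψ, 0, 0;
      ψ, -(ψ + starRingEnd ℂ ψ), starRingEnd ℂ ψ, 0;
      0, ψ, -(ψ + starRingEnd ℂ ψ), starRingEnd ℂ ψ;
      0, 0, ψ, -(ψ + starRingEnd ℂ ψ)] := torus_explicit ψ (starRingEnd ℂ ψ)
  have hherm : H.IsHermitian := by rw [hexp]; exact torus_herm ψ _ rfl
  have hsum : ψ + (starRingEnd ℂ ψ) = ((2*x : ℝ) : ℂ) := by
    rw [Complex.add_conj]
  set a : ℝ := (1 + Real.sqrt 5)/2 with ha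
  set b : ℝ := (Real.sqrt 5 - 1)/2 with hb
  have hab : a * b = 1 := by rw [ha, hb]; nlinarith
  have hs3 : a^2 + b^2 = 3 := by rw [ha, hb]; nlinarith
  set m : Multiset ℝ := {-(2*x) + a, -(2*x) - a, -(2*x) + b, -(2*x) - b} with hm
  have hchar : H.charpoly = ((m.map Complex.ofReal).map fun z => X - C z).prod := by
    rw [hexp, torus_charpoly ψ _ hmul, hsum, hm, prod_form (2*x) a b hab hs3]
  have hsig := matSig_eq_countP H hherm m (eig_multiset H hherm m hchar)
  have hane : 0 < a := by rw [ha]; linarith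
  have hbne : 0 < b := by rw [hb]; linarith
  have hm' : m = (-(2*x) + a) ::ₘ (-(2*x) - a) ::ₘ (-(2*x) + b) ::ₘ (-(2*x) - b) ::ₘ 0 := rfl
  refine ⟨?_, ?_, ?_, ?_, ?_⟩
  · intro h1
    rw [hsig, hm']
    simp only [Multiset.countP_cons, Multiset.countP_zero,
      show ¬(0 < -(2*x) + a) by linarith,
      show (-(2*x) + a < 0) by linarith,
      show ¬(0 < -(2*x) - a) by linarith,
      show (-(2*x) - a < 0) by linarith,
      show ¬(0 < -(2*x) + b) by linarith,
      show (-(2*x) + b < 0) by linarith,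
      show ¬(0 < -(2*x) - b) by linarith,
      show (-(2*x) - b < 0) by linarith]
    all_goals norm_num
  · intro h1
    rw [hsig, hm']
    simp only [Multiset.countP_cons, Multiset.countP_zero,
      show ¬(0 < -(2*x) + a) by linarith,
      show ¬(-(2*x) + a < 0) by linarith,
      show ¬(0 < -(2*x) - a) by linarith,
      show (-(2*x) - a < 0) by linarith,
      show ¬(0 < -(2*x) + b) by linarith,
      show (-(2*x) + b < 0) by linarith,
      show ¬(0 < -(2*x) - b) by linarith,
      show (-(2*x) - b < 0) by linarith]
    all_goals norm_num
  · intro h1 h2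
    rw [hsig, hm']
    simp only [Multiset.countP_cons, Multiset.countP_zero,
      show (0 < -(2*x) + a) by linarith,
      show ¬(-(2*x) + a < 0) by linarith,
      show ¬(0 < -(2*x) - a) by linarith,
      show (-(2*x) - a < 0) by linarith,
      show ¬(0 < -(2*x) + b) by linarith,
      show (-(2*x) + b < 0) by linarith,
      show ¬(0 < -(2*x) - b) by linarith,
      show (-(2*x) - b < 0) by linarith]
    all_goals norm_num
  · intro h1
    rw [hsig, hm']
    simp only [Multiset.countP_cons, Multiset.countP_zero,
      show (0 < -(2*x) + a) by linarith,
      show ¬(-(2*x) + a < 0) by linarith,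
      show ¬(0 < -(2*x) - a) by linarith,
      show (-(2*x) - a < 0) by linarith,
      show ¬(0 < -(2*x) + b) by linarith,
      show ¬(-(2*x) + b < 0) by linarith,
      show ¬(0 < -(2*x) - b) by linarith,
      show (-(2*x) - b < 0) by linarith]
    all_goals norm_num
  · intro h1 h2
    rw [hsig, hm']
    simp only [Multiset.countP_cons, Multiset.countP_zero,
      show (0 < -(2*x) + a) by linarith,
      show ¬(-(2*x) + a < 0) by linarith,
      show ¬(0 < -(2*x) - a) by linarith,
      show (-(2*x) - a < 0) by linarith,
      show (0 < -(2*x) + b) by linarith,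
      show ¬(-(2*x) + b < 0) by linarith,
      show ¬(0 < -(2*x) - b) by linarith,
      show (-(2*x) - b < 0) by linarith]
    all_goals norm_num
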